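/- In degree 1 of the complex (K^*, δ), the kernel of δ: K^1 → K^2 is exactly the two-dimensional span of c_{-1} and c_{-2}; hence H^1(K) = ⟨c_{-1}, c_{-2}⟩. -/
import Mathlib


/-- Basis vector `c_{-i}` of the space underlying the complex `K^*`. -/
noncomputable def ghostGen (i : ℕ) : ℕ →₀ ℚ := Finsupp.single i 1

open ExteriorAlgebra

noncomputable def bform (j : ℕ) : (ℕ →₀ ℚ) [⋀^Fin 2]→ₗ[ℚ] ℚ where
  toFun v := v 0 1 * v 1 j - v 0 j * v 1 1
  map_update_add' v i x y := by
    fin_cases i <;> simp [Function.update, Fin.isValue, Finsupp.add_apply] <;> ring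
  map_update_smul' v i c x := by
    fin_cases i <;> simp [Function.update, Fin.isValue, Finsupp.smul_apply] <;> ring
  map_eq_zero_of_eq' v i k h hne := by
    fin_cases i <;> fin_cases k <;> simp_all <;> ring

noncomputable def fam (j : ℕ) : ∀ n : ℕ, (ℕ →₀ ℚ) [⋀^Fin n]→ₗ[ℚ] ℚ
  | 2 => bform j
  | _ => 0

noncomputable def lam (j : ℕ) : ExteriorAlgebra ℚ (ℕ →₀ ℚ) →ₗ[ℚ] ℚ :=
  ExteriorAlgebra.liftAlternating (fam j)

theorem lam_mul (j : ℕ) (a b : ℕ →₀ ℚ) :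
    lam j (ι ℚ a * ι ℚ b) = a 1 * b j - a j * b 1 := by
  rw [lam, liftAlternating_ι_mul, liftAlternating_ι]
  show bform j (Matrix.vecCons a ![b]) = _
  simp [bform]

theorem lam_gg (j α β : ℕ) :
    lam j (ι ℚ (ghostGen α) * ι ℚ (ghostGen β)) =
      (if α = 1 then (1:ℚ) else 0) * (if β = j then 1 else 0) -
      (if α = j then (1:ℚ) else 0) * (if β = 1 then 1 else 0) := by
  rw [lam_mul]
  simp [ghostGen, Finsupp.single_apply]

theorem lam_delta (δ : ExteriorAlgebra ℚ (ℕ →₀ ℚ) →ₗ[ℚ] ExteriorAlgebra ℚ (ℕ →₀ ℚ))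
    (hgen : ∀ i : ℕ, 1 ≤ i →
      δ (ExteriorAlgebra.ι ℚ (ghostGen i))
        = ∑ α ∈ Finset.Ioo 0 i,
            ((α : ℚ) - ((i - α : ℕ) : ℚ)) •
              (ExteriorAlgebra.ι ℚ (ghostGen α) * ExteriorAlgebra.ι ℚ (ghostGen (i - α))))
    (j : ℕ) (hj : 3 ≤ j) (k : ℕ) (hk : 1 ≤ k) :
    lam (j-1) (δ (ι ℚ (ghostGen k))) = if k = j then (4 - 2*(j:ℚ)) else 0 := by
  have hk1 : ((k - 1 : ℕ) : ℚ) = (k:ℚ) - 1 := by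
    push_cast [Nat.cast_sub (by omega : 1 ≤ k)]; ring
  rw [hgen k hk, map_sum]
  simp only [map_smul, lam_gg, smul_eq_mul]
  by_cases hkj : k = j
  · subst hkj
    rw [Finset.sum_congr rfl (g := fun α =>
        (if α = 1 then (2 - (k:ℚ)) else 0) + (if α = k - 1 then (2 - (k:ℚ)) else 0))]
    · have h1 : (1:ℕ) ∈ Finset.Ioo 0 k := by simp only [Finset.mem_Ioo]; omega
      have h2 : (k-1:ℕ) ∈ Finset.Ioo 0 k := by simp only [Finset.mem_Ioo]; omega
      rw [Finset.sum_add_distrib, Finset.sum_ite_eq' _ 1, Finset.sum_ite_eq' _ (k-1),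
        if_pos h1, if_pos h2]
      rw [if_pos rfl]; ring
    · intro α hα
      simp only [Finset.mem_Ioo] at hα
      rcases eq_or_ne α 1 with h1 | h1
      · subst h1
        simp [show ¬((1:ℕ) = k-1) by omega, show ¬(k-1 = 1) by omega, hk1]
        ring
      · rcases eq_or_ne α (k-1) with h2 | h2
        · subst h2
          have e2 : k - (k-1) = 1 := by omega
          simp [e2, show ¬(k-1 = 1) by omega, hk1]
          ring
        · simp [h1, h2, show ¬(k - α = k - 1) by omega, show ¬(k - α = 1) by omega]
  · rw [if_neg hkj]
    apply Finset.sum_eq_zero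
    intro α hα
    simp only [Finset.mem_Ioo] at hα
    rcases eq_or_ne α 1 with h1 | h1
    · subst h1
      simp [show ¬(k - 1 = j - 1) by omega, show ¬((1:ℕ) = j-1) by omega]
    · rcases eq_or_ne α (j-1) with h2 | h2
      · subst h2
        simp [show ¬(j - 1 = 1) by omega, show ¬(k - (j-1) = 1) by omega]
      · simp [h1, h2]

theorem iota_decomp (v : ℕ →₀ ℚ) :
    (ι ℚ v : ExteriorAlgebra ℚ (ℕ →₀ ℚ)) = ∑ k ∈ v.support, v k • ι ℚ (ghostGen k) := by
  conv_lhs => rw [← Finsupp.sum_single v]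
  rw [Finsupp.sum, map_sum]
  refine Finset.sum_congr rfl fun k _ => ?_
  rw [show Finsupp.single k (v k) = v k • ghostGen k by
    rw [ghostGen, Finsupp.smul_single, smul_eq_mul, mul_one], map_smul]

/-- In degree 1 of the complex `(K^*, δ)`, the kernel of `δ : K¹ → K²` is
exactly the span of `c_{-1}` and `c_{-2}`. -/
theorem stmt6
    (δ : ExteriorAlgebra ℚ (ℕ →₀ ℚ) →ₗ[ℚ] ExteriorAlgebra ℚ (ℕ →₀ ℚ))
    (hgen : ∀ i : ℕ, 1 ≤ i →
      δ (ExteriorAlgebra.ι ℚ (ghostGen i))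
        = ∑ α ∈ Finset.Ioo 0 i,
            ((α : ℚ) - ((i - α : ℕ) : ℚ)) •
              (ExteriorAlgebra.ι ℚ (ghostGen α) * ExteriorAlgebra.ι ℚ (ghostGen (i - α)))) :
    (∀ i : ℕ, 1 ≤ i →
        (δ (ExteriorAlgebra.ι ℚ (ghostGen i)) = 0 ↔ i = 1 ∨ i = 2)) ∧
    (∀ v : ℕ →₀ ℚ, (∀ i : ℕ, v i ≠ 0 → 1 ≤ i) →
        (δ (ExteriorAlgebra.ι ℚ v) = 0 ↔
          v ∈ Submodule.span ℚ {ghostGen 1, ghostGen 2})) := by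
  have hδ1 : δ (ExteriorAlgebra.ι ℚ (ghostGen 1)) = 0 := by
    rw [hgen 1 le_rfl, show Finset.Ioo 0 1 = ∅ by decide, Finset.sum_empty]
  have hδ2 : δ (ExteriorAlgebra.ι ℚ (ghostGen 2)) = 0 := by
    rw [hgen 2 (by norm_num)]
    rw [show Finset.Ioo 0 2 = {1} by decide, Finset.sum_singleton]
    norm_num
  have part1 : ∀ i : ℕ, 1 ≤ i →
      (δ (ExteriorAlgebra.ι ℚ (ghostGen i)) = 0 ↔ i = 1 ∨ i = 2) := by
    intro i hi
    constructor
    · intro h0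
      by_contra hne
      push_neg at hne
      have hi3 : 3 ≤ i := by omega
      have hl := lam_delta δ hgen i hi3 i hi
      rw [h0, map_zero, if_pos rfl] at hl
      have : (i:ℚ) = 2 := by linarith
      have : i = 2 := by exact_mod_cast this
      omega
    · rintro (rfl | rfl)
      · exact hδ1
      · exact hδ2
  refine ⟨part1, fun v hv => ?_⟩
  constructor
  · intro h0
    have hdec : δ (ExteriorAlgebra.ι ℚ v)
        = ∑ k ∈ v.support, v k • δ (ExteriorAlgebra.ι ℚ (ghostGen k)) := by
      rw [iota_decomp, map_sum]
      simp [map_smul]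
    have key : ∀ a : ℕ, 3 ≤ a → v a = 0 := by
      intro a ha
      by_cases hmem : a ∈ v.support
      · have h2 := congrArg (lam (a-1)) (hdec.symm.trans h0)
        rw [map_zero, map_sum] at h2
        have hsum : ∑ k ∈ v.support, lam (a-1) (v k • δ (ExteriorAlgebra.ι ℚ (ghostGen k)))
            = ∑ k ∈ v.support, (if k = a then v k * (4 - 2*(a:ℚ)) else 0) := by
          refine Finset.sum_congr rfl fun k hk => ?_
          have hk1 : 1 ≤ k := hv k (Finsupp.mem_support_iff.mp hk)
          rw [map_smul, lam_delta δ hgen a ha k hk1, smul_eq_mul, mul_ite, mul_zero]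
        rw [hsum, Finset.sum_ite_eq' _ a, if_pos hmem] at h2
        have hne : (4 - 2*(a:ℚ)) ≠ 0 := by
          have : (3:ℚ) ≤ (a:ℚ) := by exact_mod_cast ha
          intro h; linarith
        have := mul_eq_zero.mp h2
        tauto
      · exact Finsupp.notMem_support_iff.mp hmem
    have hv0 : v 0 = 0 := by
      by_contra h
      exact absurd (hv 0 h) (by omega)
    rw [Submodule.mem_span_pair]
    refine ⟨v 1, v 2, ?_⟩
    ext a
    simp only [Finsupp.add_apply, Finsupp.smul_apply, ghostGen, Finsupp.single_apply,
      smul_eq_mul]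
    rcases eq_or_ne a 1 with rfl | h1
    · norm_num
    · rcases eq_or_ne a 2 with rfl | h2
      · norm_num
      · rw [if_neg (by omega), if_neg (by omega)]
        rcases Nat.lt_or_ge a 3 with hlt | hge
        · have ha0 : a = 0 := by omega
          subst ha0
          simp [hv0]
        · simp [key a hge]
  · intro hmem
    rw [Submodule.mem_span_pair] at hmem
    obtain ⟨a, b, rfl⟩ := hmem
    simp [map_add, map_smul, hδ1, hδ2]
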